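/- Let Θ ⊆ ℝ^p be a convex set, let f : ℝ^p → ℝ be ρ-weakly convex, and let ρ̂ > ρ > 0. Let θ₁, θ₂ ∈ ℝ^p and suppose θ̂₁, θ̂₂ ∈ Θ are minimizers over Θ of θ' ↦ f(θ') + (ρ̂/2)‖θ' − θ₁‖² and θ' ↦ f(θ') + (ρ̂/2)‖θ' − θ₂‖², respectively. Then ‖θ̂₁ − θ̂₂‖ ≤ (ρ̂/(ρ̂ − ρ)) ‖θ₁ − θ₂‖. -/

import Mathlib

/-!
Adding `ρ̂/2 ‖· − θᵢ‖²` to a `ρ`-weakly convex function gives a `(ρ̂ − ρ)`-strongly convex one,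
so its minimizer `θ̂ᵢ` over the convex set `Θ` has quadratic growth:
`gᵢ θ̂ᵢ + (ρ̂ − ρ)/2 ‖θ − θ̂ᵢ‖² ≤ gᵢ θ` on `Θ`. Adding the two growth inequalities at the other
minimizer, the values of `f` cancel and the quadratic terms combine into
`(ρ̂ − ρ) ‖θ̂₁ − θ̂₂‖² ≤ ρ̂ ⟪θ̂₁ − θ̂₂, θ₁ − θ₂⟫`; Cauchy–Schwarz finishes.
-/

open Filter Topology Set RealInnerProductSpace

section NormedSpace

variable {E : Type*} [NormedAddCommGroup E] [NormedSpace ℝ E] {s : Set E} {g : E → ℝ} {m : ℝ}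
  {x₀ x : E}

lemma StrongConvexOn.add_sq_norm_sub_le_of_isMinOn (hg : StrongConvexOn s m g)
    (hmin : IsMinOn g s x₀) (hx₀ : x₀ ∈ s) (hx : x ∈ s) :
    g x₀ + m / 2 * ‖x - x₀‖ ^ 2 ≤ g x := by
  have hsegment : ∀ t ∈ Ioo (0 : ℝ) 1, g x₀ + (1 - t) * (m / 2 * ‖x - x₀‖ ^ 2) ≤ g x := by
    rintro t ⟨ht₀, ht₁⟩
    have hmem := hg.1 hx₀ hx (sub_nonneg.2 ht₁.le) ht₀.le (sub_add_cancel 1 t)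
    have hle := isMinOn_iff.1 hmin _ hmem
    have hconv := hg.2 hx₀ hx (sub_nonneg.2 ht₁.le) ht₀.le (sub_add_cancel 1 t)
    simp only [norm_sub_rev x₀, smul_eq_mul] at hconv
    refine le_of_mul_le_mul_left ?_ ht₀
    linarith
  have hlim : Tendsto (fun t : ℝ ↦ g x₀ + (1 - t) * (m / 2 * ‖x - x₀‖ ^ 2)) (𝓝[>] 0)
      (𝓝 (g x₀ + m / 2 * ‖x - x₀‖ ^ 2)) := by
    refine (Continuous.tendsto' ?_ 0 _ ?_).mono_left nhdsWithin_le_nhds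
    · fun_prop
    · simp
  exact le_of_tendsto hlim (eventually_of_mem (Ioo_mem_nhdsGT one_pos) hsegment)

end NormedSpace

section InnerProductSpace

variable {E : Type*} [NormedAddCommGroup E] [InnerProductSpace ℝ E] {s : Set E} {f : E → ℝ}
  {ρ : ℝ}

lemma ConvexOn.strongConvexOn_add_sq_norm_sub
    (hf : ConvexOn ℝ s fun x ↦ f x + ρ / 2 * ‖x‖ ^ 2) (ρ' : ℝ) (c : E) :
    StrongConvexOn s (ρ' - ρ) fun x ↦ f x + ρ' / 2 * ‖x - c‖ ^ 2 := by
  rw [strongConvexOn_iff_convex]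
  have hlin := ((-ρ') • (innerSL ℝ c).toLinearMap).convexOn hf.1
  refine ((hf.add hlin).add_const (ρ' / 2 * ‖c‖ ^ 2)).congr fun x _ ↦ ?_
  simp only [Pi.add_apply, LinearMap.smul_apply, ContinuousLinearMap.coe_coe, innerSL_apply_apply,
    smul_eq_mul, norm_sub_sq_real, real_inner_comm x c]
  ring

lemma norm_sub_sq_add_norm_sub_sq_sub_sub (a b c d : E) :
    ‖b - c‖ ^ 2 + ‖a - d‖ ^ 2 - ‖a - c‖ ^ 2 - ‖b - d‖ ^ 2 = 2 * ⟪a - b, c - d⟫ := by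
  simp only [norm_sub_sq_real, inner_sub_left, inner_sub_right]
  ring

lemma norm_le_div_mul_of_mul_sq_le_mul_inner {μ L : ℝ} {u v : E} (hμ : 0 < μ) (hL : 0 ≤ L)
    (h : μ * ‖u‖ ^ 2 ≤ L * ⟪u, v⟫) : ‖u‖ ≤ L / μ * ‖v‖ := by
  have hcs : μ * ‖u‖ ^ 2 ≤ ‖u‖ * (L * ‖v‖) := by
    nlinarith [real_inner_le_norm u v]
  rw [div_mul_eq_mul_div, le_div_iff₀ hμ]
  rcases (norm_nonneg u).eq_or_lt with hu | hu
  · rw [← hu, zero_mul]; positivity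
  · nlinarith

end InnerProductSpace

/-- If `f` is `ρ`-weakly convex, `ρ̂ > ρ > 0`, and `θ̂₁, θ̂₂ ∈ Θ` (convex) are
proximal points of `θ₁, θ₂` with parameter `ρ̂`, then `‖θ̂₁ − θ̂₂‖ ≤ (ρ̂/(ρ̂ − ρ))‖θ₁ − θ₂‖`. -/
theorem stmt14 (p : ℕ) (Θ : Set (EuclideanSpace ℝ (Fin p))) (hΘ : Convex ℝ Θ)
    (f : EuclideanSpace ℝ (Fin p) → ℝ) (ρ ρh : ℝ) (hρ : 0 < ρ) (hρh : ρ < ρh)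
    (hwc : ConvexOn ℝ Set.univ (fun x => f x + (ρ / 2) * ‖x‖ ^ 2))
    (θ₁ θ₂ : EuclideanSpace ℝ (Fin p))
    (θhat₁ θhat₂ : EuclideanSpace ℝ (Fin p)) (hmem₁ : θhat₁ ∈ Θ) (hmem₂ : θhat₂ ∈ Θ)
    (hmin₁ : ∀ θ' ∈ Θ,
      f θhat₁ + (ρh / 2) * ‖θhat₁ - θ₁‖ ^ 2 ≤ f θ' + (ρh / 2) * ‖θ' - θ₁‖ ^ 2)
    (hmin₂ : ∀ θ' ∈ Θ,
      f θhat₂ + (ρh / 2) * ‖θhat₂ - θ₂‖ ^ 2 ≤ f θ' + (ρh / 2) * ‖θ' - θ₂‖ ^ 2) :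
    ‖θhat₁ - θhat₂‖ ≤ (ρh / (ρh - ρ)) * ‖θ₁ - θ₂‖ := by
  have hwcΘ := hwc.subset (subset_univ Θ) hΘ
  have hgrowth₁ := (hwcΘ.strongConvexOn_add_sq_norm_sub ρh θ₁).add_sq_norm_sub_le_of_isMinOn
    (isMinOn_iff.2 hmin₁) hmem₁ hmem₂
  have hgrowth₂ := (hwcΘ.strongConvexOn_add_sq_norm_sub ρh θ₂).add_sq_norm_sub_le_of_isMinOn
    (isMinOn_iff.2 hmin₂) hmem₂ hmem₁
  have hfour := norm_sub_sq_add_norm_sub_sq_sub_sub θhat₁ θhat₂ θ₁ θ₂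
  refine norm_le_div_mul_of_mul_sq_le_mul_inner (sub_pos.2 hρh) (hρ.trans hρh).le ?_
  rw [norm_sub_rev θhat₂] at hgrowth₁
  linear_combination hgrowth₁ + hgrowth₂ + ρh / 2 * hfour
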